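/- arXiv:2203.01214 — 2 statements merged into one kernel-verified Lean document; each statement's English description precedes it below -/
import Mathlib

section
/- Let τ_1 ≤ τ_2 ≤ ... ≤ τ_P be positive integers such that for every positive integer m, the number of indices i with τ_i ≤ m is at most mK. Then (1/P)∑_{i=1}^P τ_i ≥ (K/(2P))·(1 + ⌊P/K⌋)·⌊P/K⌋. -/
lemma staleness_aux (K : ℕ) (hK : 0 < K) (n : ℕ) :
    2 * ∑ i ∈ Finset.range (n * K), (i / K + 1) = K * (n * (n + 1)) := by
  induction n with
  | zero => simp
  | succ n ih =>
    have h : (n + 1) * K = n * K + K := by ring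
    rw [h, Finset.sum_range_add]
    have h2 : ∀ j ∈ Finset.range K, (n * K + j) / K + 1 = n + 1 := by
      intro j hj
      rw [Finset.mem_range] at hj
      rw [mul_comm n K, Nat.mul_add_div hK, Nat.div_eq_of_lt hj]
    rw [Finset.sum_congr rfl h2, Finset.sum_const, Finset.card_range, smul_eq_mul]
    rw [Nat.mul_add, ih]
    ring

theorem average_staleness_lower_bound
    (P K : ℕ) (hP : 0 < P) (hK : 0 < K) (hKP : K ≤ P)
    (τ : Fin P → ℕ) (hpos : ∀ i, 1 ≤ τ i) (hmono : Monotone τ)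
    (hcount : ∀ m : ℕ, 0 < m →
      (Finset.univ.filter (fun i => τ i ≤ m)).card ≤ m * K) :
    (K : ℝ) / (2 * P) * (1 + (P / K : ℕ)) * (P / K : ℕ) ≤
      (1 / P) * ∑ i, (τ i : ℝ) := by
  set q := P / K with hq
  -- pointwise lower bound
  have key : ∀ i : Fin P, (i : ℕ) / K + 1 ≤ τ i := by
    intro i
    have hm := hcount (τ i) (hpos i)
    have hsub : Finset.Iic i ⊆ Finset.univ.filter (fun j => τ j ≤ τ i) := by
      intro j hj
      simp only [Finset.mem_Iic] at hj
      simp only [Finset.mem_filter, Finset.mem_univ, true_and]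
      exact hmono hj
    have hcard : (i : ℕ) + 1 ≤ (Finset.univ.filter (fun j => τ j ≤ τ i)).card := by
      have := Finset.card_le_card hsub
      rwa [Fin.card_Iic] at this
    have hlt : (i : ℕ) < τ i * K := lt_of_lt_of_le (Nat.lt_succ_self _) (le_trans hcard hm)
    have := (Nat.div_lt_iff_lt_mul hK).2 hlt
    omega
  have hsum1 : ∑ i ∈ Finset.range P, (i / K + 1) ≤ ∑ i, τ i := by
    rw [← Fin.sum_univ_eq_sum_range (fun i => i / K + 1)]
    exact Finset.sum_le_sum (fun i _ => key i)
  have hsub2 : ∑ i ∈ Finset.range (q * K), (i / K + 1) ≤ ∑ i ∈ Finset.range P, (i / K + 1) := by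
    apply Finset.sum_le_sum_of_subset
    apply Finset.range_subset_range.2
    exact Nat.div_mul_le_self P K
  have hnat : K * (q * (q + 1)) ≤ 2 * ∑ i, τ i := by
    rw [← staleness_aux K hK q]
    omega
  have hP' : (0 : ℝ) < P := by exact_mod_cast hP
  have hcast : (K : ℝ) * (q * (q + 1)) ≤ 2 * ∑ i, (τ i : ℝ) := by
    have := hnat
    push_cast [← Nat.cast_sum] at *
    exact_mod_cast hnat
  rw [div_mul_eq_mul_div, div_mul_eq_mul_div, div_le_iff₀ (by positivity), one_div,
    inv_mul_eq_div, div_mul_eq_mul_div, le_div_iff₀ hP']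
  nlinarith [hcast, hP']
end

section
/- Suppose X_1,...,X_K are random vectors in R^n with E[X_i] = c_i, E[||X_i − c_i||²] ≤ σ²/m + (M/m)||c_i||², and p_1,...,p_K are nonnegative constants with ∑ p_i = 1, where the X_i are independent. Then E[||∑_{i=1}^K p_i X_i||²] ≤ (σ²/m)∑_{i=1}^K p_i² + ∑_{i=1}^K p_i((M/m)p_i + 1)||c_i||². -/
open MeasureTheory

theorem weighted_second_moment_bound
    {Ω : Type*} [MeasureSpace Ω] [IsProbabilityMeasure (volume : Measure Ω)]
    (n K : ℕ)
    (X : Fin K → Ω → EuclideanSpace ℝ (Fin n))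
    (c : Fin K → EuclideanSpace ℝ (Fin n))
    (p : Fin K → ℝ) (m σ2 M : ℝ) (hm : 0 < m) (hσ2 : 0 ≤ σ2) (hM : 0 ≤ M)
    (hp : ∀ i, 0 ≤ p i) (hpsum : ∑ i, p i = 1)
    (hmean : ∀ i, ∫ ω, X i ω = c i)
    (hvar : ∀ i, ∫ ω, ‖X i ω - c i‖ ^ 2 ≤ σ2 / m + (M / m) * ‖c i‖ ^ 2)
    (hindep : ∀ i k, i ≠ k →
      ∫ ω, (inner ℝ (X i ω - c i) (X k ω - c k) : ℝ) = 0)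
    (hint : ∀ i, Integrable (X i))
    (hint2 : Integrable (fun ω => ‖∑ i, p i • X i ω‖ ^ 2))
    (hint3 : ∀ i, Integrable (fun ω => ‖X i ω - c i‖ ^ 2)) :
    ∫ ω, ‖∑ i, p i • X i ω‖ ^ 2 ≤
      (σ2 / m) * ∑ i, (p i) ^ 2 +
        ∑ i, p i * ((M / m) * p i + 1) * ‖c i‖ ^ 2 := by
  set Y : Fin K → Ω → EuclideanSpace ℝ (Fin n) := fun i ω => X i ω - c i with hY
  set b : EuclideanSpace ℝ (Fin n) := ∑ i, p i • c i with hb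
  have hYint : ∀ i, Integrable (Y i) := fun i => (hint i).sub (integrable_const _)
  have hYmean : ∀ i, ∫ ω, Y i ω = 0 := by
    intro i
    simp [hY, integral_sub (hint i) (integrable_const _), hmean i]
  have hinner_int : ∀ i k, Integrable (fun ω => (inner ℝ (Y i ω) (Y k ω) : ℝ)) := by
    intro i k
    refine Integrable.mono' (((hint3 i).add (hint3 k)).div_const 2)
      ((hYint i).aestronglyMeasurable.inner (hYint k).aestronglyMeasurable) ?_
    filter_upwards with ω
    have h1 := abs_real_inner_le_norm (Y i ω) (Y k ω)
    have h2 : 2 * ‖Y i ω‖ * ‖Y k ω‖ ≤ ‖Y i ω‖ ^ 2 + ‖Y k ω‖ ^ 2 := two_mul_le_add_sq _ _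
    simp only [Real.norm_eq_abs, Pi.add_apply]
    have e1 : ‖X i ω - c i‖ = ‖Y i ω‖ := rfl
    have e2 : ‖X k ω - c k‖ = ‖Y k ω‖ := rfl
    rw [e1, e2]
    nlinarith [abs_nonneg (inner ℝ (Y i ω) (Y k ω) : ℝ)]
  have hbint : ∀ i, Integrable (fun ω => (inner ℝ (Y i ω) b : ℝ)) := by
    intro i
    simpa using (hYint i).inner_const b
  have key : ∫ ω, ‖∑ i, p i • X i ω‖ ^ 2
      = (∑ i, (p i) ^ 2 * ∫ ω, ‖Y i ω‖ ^ 2) + ‖b‖ ^ 2 := by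
    have hpt : ∀ ω, ‖∑ i, p i • X i ω‖ ^ 2
        = (∑ i, ∑ k, p i * p k * (inner ℝ (Y i ω) (Y k ω) : ℝ))
          + 2 * (∑ i, p i * (inner ℝ (Y i ω) b : ℝ)) + ‖b‖ ^ 2 := by
      intro ω
      have hsplit : ∑ i, p i • X i ω = (∑ i, p i • Y i ω) + b := by
        rw [hb, ← Finset.sum_add_distrib]
        congr 1; ext i
        rw [← smul_add]
        simp [hY]
      rw [hsplit, norm_add_sq_real]
      congr 2
      · rw [← real_inner_self_eq_norm_sq, sum_inner]
        refine Finset.sum_congr rfl fun i _ => ?_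
        rw [inner_sum]
        refine Finset.sum_congr rfl fun k _ => ?_
        rw [real_inner_smul_left, real_inner_smul_right]; ring
      · congr 1
        rw [sum_inner]
        refine Finset.sum_congr rfl fun i _ => ?_
        rw [real_inner_smul_left]
    calc ∫ ω, ‖∑ i, p i • X i ω‖ ^ 2
        = ∫ ω, ((∑ i, ∑ k, p i * p k * (inner ℝ (Y i ω) (Y k ω) : ℝ))
          + 2 * (∑ i, p i * (inner ℝ (Y i ω) b : ℝ)) + ‖b‖ ^ 2) :=
        by simp only [hpt]
      _ = (∑ i, (p i) ^ 2 * ∫ ω, ‖Y i ω‖ ^ 2) + ‖b‖ ^ 2 := by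
        have intA : Integrable (fun ω => ∑ i, ∑ k, p i * p k * (inner ℝ (Y i ω) (Y k ω) : ℝ)) :=
          integrable_finset_sum _ fun i _ =>
            integrable_finset_sum _ fun k _ => (hinner_int i k).const_mul _
        have intB : Integrable (fun ω => 2 * (∑ i, p i * (inner ℝ (Y i ω) b : ℝ))) :=
          (integrable_finset_sum _ fun i _ => (hbint i).const_mul _).const_mul 2
        have intAB : Integrable (fun ω => (∑ i, ∑ k, p i * p k * (inner ℝ (Y i ω) (Y k ω) : ℝ))
            + 2 * (∑ i, p i * (inner ℝ (Y i ω) b : ℝ))) := intA.add intB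
        rw [integral_add intAB (integrable_const _),
          integral_add intA intB, integral_const]
        simp only [probReal_univ, measure_univ, ENNReal.toReal_one, one_smul]
        have hA : ∫ ω, ∑ i, ∑ k, p i * p k * (inner ℝ (Y i ω) (Y k ω) : ℝ)
            = ∑ i, (p i) ^ 2 * ∫ ω, ‖Y i ω‖ ^ 2 := by
          rw [integral_finset_sum _ fun i _ =>
            integrable_finset_sum _ fun k _ => (hinner_int i k).const_mul _]
          refine Finset.sum_congr rfl fun i _ => ?_
          rw [integral_finset_sum _ fun k _ => (hinner_int i k).const_mul _]
          rw [Finset.sum_eq_single i]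
          · rw [integral_const_mul]
            have : ∫ ω, (inner ℝ (Y i ω) (Y i ω) : ℝ) = ∫ ω, ‖Y i ω‖ ^ 2 := by
              refine integral_congr_ae (Filter.Eventually.of_forall fun ω => ?_)
              exact real_inner_self_eq_norm_sq _
            rw [this]; ring
          · intro k _ hki
            rw [integral_const_mul, hindep i k (Ne.symm hki), mul_zero]
          · intro h; exact absurd (Finset.mem_univ i) h
        have hB : ∫ ω, 2 * (∑ i, p i * (inner ℝ (Y i ω) b : ℝ)) = 0 := by
          rw [integral_const_mul,
            integral_finset_sum _ fun i _ => (hbint i).const_mul _]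
          have : ∀ i : Fin K, ∫ ω, p i * (inner ℝ (Y i ω) b : ℝ) = 0 := by
            intro i
            rw [integral_const_mul]
            have : ∫ ω, (inner ℝ (Y i ω) b : ℝ) = ∫ ω, (inner ℝ b (Y i ω) : ℝ) := by
              refine integral_congr_ae (Filter.Eventually.of_forall fun ω => ?_)
              exact real_inner_comm _ _
            rw [this, integral_inner (hYint i), hYmean i, inner_zero_right, mul_zero]
          rw [Finset.sum_eq_zero fun i _ => this i, mul_zero]
        rw [hA, hB]; ring
  rw [key]
  have h1 : ∑ i, (p i) ^ 2 * ∫ ω, ‖Y i ω‖ ^ 2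
      ≤ ∑ i, (p i) ^ 2 * (σ2 / m + (M / m) * ‖c i‖ ^ 2) :=
    Finset.sum_le_sum fun i _ => mul_le_mul_of_nonneg_left (hvar i) (sq_nonneg _)
  have h2 : ‖b‖ ^ 2 ≤ ∑ i, p i * ‖c i‖ ^ 2 := by
    have hnb : ‖b‖ ≤ ∑ i, p i * ‖c i‖ := by
      refine (norm_sum_le _ _).trans_eq ?_
      refine Finset.sum_congr rfl fun i _ => ?_
      rw [norm_smul, Real.norm_eq_abs, abs_of_nonneg (hp i)]
    have hcs : (∑ i, p i * ‖c i‖) ^ 2 ≤ (∑ i, p i) * ∑ i, p i * ‖c i‖ ^ 2 := by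
      have := Finset.sum_mul_sq_le_sq_mul_sq Finset.univ
        (fun i => Real.sqrt (p i)) (fun i => Real.sqrt (p i) * ‖c i‖)
      calc (∑ i, p i * ‖c i‖) ^ 2
          = (∑ i, Real.sqrt (p i) * (Real.sqrt (p i) * ‖c i‖)) ^ 2 := by
            congr 1
            refine Finset.sum_congr rfl fun i _ => ?_
            rw [← mul_assoc, Real.mul_self_sqrt (hp i)]
        _ ≤ (∑ i, Real.sqrt (p i) ^ 2) * ∑ i, (Real.sqrt (p i) * ‖c i‖) ^ 2 := this
        _ = (∑ i, p i) * ∑ i, p i * ‖c i‖ ^ 2 := by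
            congr 1
            · exact Finset.sum_congr rfl fun i _ => Real.sq_sqrt (hp i)
            · refine Finset.sum_congr rfl fun i _ => ?_
              rw [mul_pow, Real.sq_sqrt (hp i)]
    have hb2 : ‖b‖ ^ 2 ≤ (∑ i, p i * ‖c i‖) ^ 2 := by
      have h0 : (0:ℝ) ≤ ‖b‖ := norm_nonneg _
      nlinarith
    rw [hpsum] at hcs
    linarith
  calc (∑ i, (p i) ^ 2 * ∫ ω, ‖Y i ω‖ ^ 2) + ‖b‖ ^ 2
      ≤ (∑ i, (p i) ^ 2 * (σ2 / m + (M / m) * ‖c i‖ ^ 2)) + ∑ i, p i * ‖c i‖ ^ 2 :=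
        add_le_add h1 h2
    _ = ∑ i, (σ2 / m * (p i) ^ 2 + p i * ((M / m) * p i + 1) * ‖c i‖ ^ 2) := by
        rw [← Finset.sum_add_distrib]
        exact Finset.sum_congr rfl fun i _ => by ring
    _ = (σ2 / m) * ∑ i, (p i) ^ 2 + ∑ i, p i * ((M / m) * p i + 1) * ‖c i‖ ^ 2 := by
        rw [Finset.sum_add_distrib, Finset.mul_sum]
end
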